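/- arXiv:1407.3154 — 3 statements merged into one kernel-verified Lean document; each statement's English description precedes it below -/
import Mathlib

section
/- Let w : (0,∞) → ℝ be concave and differentiable, and suppose w_λ(z) := w(λz) − log(λ)/κ converges pointwise to v(z) = C + log(κz)/κ as λ → ∞ (for some constant C), for each z in an open interval. Then λ w'(λ) → 1/κ as λ → ∞; equivalently w'(z) = 1/(κz) + o(1/z) as z → ∞. -/
/-! A concave function's derivative at `x` is squeezed between its secant slopes to the left and
right of `x`. If concave functions converge pointwise to `v`, these secant slopes converge to those
of `v`, which in turn approach `v'(x)`; hence the derivatives converge to `v'(x)`. Applied at a point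
`m ∈ (a, b)` to the rescaled functions `z ↦ w (l z) - log l / κ`, whose derivative at `m` is
`l w'(l m)`, this gives `l w'(l m) → 1 / (κ m)`, and substituting `l ↦ l / m` yields the claim. -/

open Filter Topology Set

theorem tendsto_deriv_of_concaveOn_of_tendsto {ι : Type*} {F : Filter ι} {f : ι → ℝ → ℝ}
    {v : ℝ → ℝ} {S : Set ℝ} {x v' : ℝ} (hS : S ∈ 𝓝 x)
    (hconc : ∀ᶠ i in F, ConcaveOn ℝ S (f i))
    (hdiff : ∀ᶠ i in F, DifferentiableAt ℝ (f i) x)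
    (hlim : ∀ y ∈ S, Tendsto (fun i => f i y) F (𝓝 (v y)))
    (hv : HasDerivAt v v' x) :
    Tendsto (fun i => deriv (f i) x) F (𝓝 v') := by
  have hx : x ∈ S := mem_of_mem_nhds hS
  have hslope : ∀ y ∈ S, Tendsto (fun i => slope (f i) x y) F (𝓝 (slope v x y)) :=
    fun y hy => ((hlim y hy).sub (hlim x hx)).const_smul _
  refine tendsto_order.2 ⟨fun c hc => ?_, fun c hc => ?_⟩
  · obtain ⟨y, hcy, hyS, hxy⟩ : ∃ y, c < slope v x y ∧ y ∈ S ∧ x < y :=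
      (((hv.tendsto_slope.mono_left (nhdsGT_le_nhdsNE x)).eventually
        (eventually_gt_nhds hc)).and
        (inter_mem (mem_nhdsWithin_of_mem_nhds hS) self_mem_nhdsWithin)).exists
    filter_upwards [(hslope y hyS).eventually (eventually_gt_nhds hcy), hconc, hdiff] with
      i hci hconci hdiffi
    exact hci.trans_le (hconci.slope_le_deriv hx hyS hxy hdiffi)
  · obtain ⟨y, hcy, hyS, hyx⟩ : ∃ y, slope v x y < c ∧ y ∈ S ∧ y < x :=
      (((hv.tendsto_slope.mono_left (nhdsLT_le_nhdsNE x)).eventually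
        (eventually_lt_nhds hc)).and
        (inter_mem (mem_nhdsWithin_of_mem_nhds hS) self_mem_nhdsWithin)).exists
    filter_upwards [(hslope y hyS).eventually (eventually_lt_nhds hcy), hconc, hdiff] with
      i hci hconci hdiffi
    rw [slope_comm] at hci
    exact (hconci.deriv_le_slope hyS hx hyx hdiffi).trans_lt hci

theorem ConcaveOn.comp_const_mul_Ioi {w : ℝ → ℝ} (hw : ConcaveOn ℝ (Ioi 0) w) {c : ℝ}
    (hc : 0 < c) : ConcaveOn ℝ (Ioi 0) fun z => w (c * z) := by
  have h := hw.comp_linearMap (LinearMap.mulLeft ℝ c)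
  rwa [show ⇑(LinearMap.mulLeft ℝ c) = (c * ·) from rfl, preimage_const_mul_Ioi₀ 0 hc,
    zero_div] at h

theorem hasDerivAt_const_add_log_const_mul_div {κ z : ℝ} (hκ : κ ≠ 0) (hz : z ≠ 0) (C : ℝ) :
    HasDerivAt (fun z => C + Real.log (κ * z) / κ) (1 / (κ * z)) z := by
  have h := (((hasDerivAt_id z).const_mul κ).log (mul_ne_zero hκ hz)).div_const κ |>.const_add C
  exact h.congr_deriv (by simp only [id]; field_simp)

/-- Lemma 3 of the paper: if the rescaled concave value function
w_λ(z) = w(λz) − log λ/κ converges pointwise to C + log(κz)/κ on an open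
interval, then λ w'(λ) → 1/κ. -/
theorem rescaled_value_derivative_limit
    (κ C : ℝ) (hκ : 0 < κ)
    (w : ℝ → ℝ)
    (hconc : ConcaveOn ℝ (Set.Ioi 0) w)
    (hdiff : ∀ z : ℝ, 0 < z → DifferentiableAt ℝ w z)
    (a b : ℝ) (hab : a < b) (ha : 0 < a)
    (hconv : ∀ z ∈ Set.Ioo a b,
      Tendsto (fun l : ℝ => w (l * z) - Real.log l / κ) atTop
        (nhds (C + Real.log (κ * z) / κ))) :
    Tendsto (fun l : ℝ => l * deriv w l) atTop (nhds (1 / κ)) := by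
  obtain ⟨m, ham, hmb⟩ := exists_between hab
  have hm : 0 < m := ha.trans ham
  have hrescaled : Tendsto (fun l => deriv (fun z => w (l * z) - Real.log l / κ) m) atTop
      (𝓝 (1 / (κ * m))) := by
    refine tendsto_deriv_of_concaveOn_of_tendsto (Ioo_mem_nhds ham hmb) ?_ ?_ hconv
      (hasDerivAt_const_add_log_const_mul_div hκ.ne' hm.ne' C)
    · filter_upwards [eventually_gt_atTop 0] with l hl
      exact ((hconc.comp_const_mul_Ioi hl).subset (fun z hz => ha.trans hz.1)
        (convex_Ioo a b)).sub (convexOn_const _ (convex_Ioo a b))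
    · filter_upwards [eventually_gt_atTop 0] with l hl
      exact ((hdiff _ (mul_pos hl hm)).comp m (differentiableAt_id.const_mul l)).sub_const _
  have hderiv (l : ℝ) : deriv (fun z => w (l * z) - Real.log l / κ) m = l * deriv w (l * m) := by
    rw [deriv_sub_const, deriv_comp_mul_left, smul_eq_mul]
  have hscaled := ((hrescaled.congr hderiv).comp (tendsto_id.atTop_div_const hm)).const_mul m
  convert hscaled using 2 with l
  · simp only [Function.comp_apply, id, div_mul_cancel₀ l hm.ne']
    field_simp
  · field_simp
end

section
/- Fix constants κ > 0, γ ∈ (0,1), and d₁ ≠ 0, d₂ > 0, d₃, δ ∈ ℝ. There exist constants C₃ > 0 and γ ∈ (0,1) sufficiently close to 1 such that W⁺(z) = (z + C₃)^γ satisfies the supersolution inequality −(d₁²/2)·(W⁺')²/W⁺'' + d₂ z² W⁺'' + d₃ z W⁺' + δ W⁺' − 1 − log(W⁺') − κ W⁺ ≤ 0 for all sufficiently large z > 0. -/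
/-!
With `C₃ = 1` and `u = z + 1 ≥ 1`, the quotient term equals `(d₁²/2) γ/(1-γ) u^γ`, the `d₂`-term
is nonpositive, the `d₃`- and `δ`-terms are at most `|d₃| γ u^γ` and `|δ|`, and
`-log W⁺' = -log γ + (1-γ) log u`. Choosing `γ` small makes the total coefficient of `u^γ` at most
`-κ/2`, and `-(κ/2) u^γ` eventually dominates the logarithm.
-/

open Asymptotics Filter Real Set Topology

noncomputable section

/-- The left-hand side of the stationary dual HJB equation, evaluated at `z` on the values
`w, w', w''` of a function and its first two derivatives. -/
def dualHJBOperator (κ d₁ d₂ d₃ δ z w w' w'' : ℝ) : ℝ :=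
  -(d₁ ^ 2 / 2) * w' ^ 2 / w'' + d₂ * z ^ 2 * w'' + d₃ * z * w' + δ * w' - 1 - log w' - κ * w

end

lemma sq_mul_rpow_sub_one_div {u γ : ℝ} (hu : 0 < u) (hγ₀ : γ ≠ 0) (hγ₁ : γ ≠ 1) :
    (γ * u ^ (γ - 1)) ^ 2 / (γ * (γ - 1) * u ^ (γ - 2)) = γ / (γ - 1) * u ^ γ := by
  have hpow : u ^ (γ - 1) * u ^ (γ - 1) = u ^ (γ - 2) * u ^ γ := by
    rw [← rpow_add hu, ← rpow_add hu]; ring_nf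
  have hγ₁' : γ - 1 ≠ 0 := sub_ne_zero.2 hγ₁
  rw [div_eq_iff (by positivity)]
  field_simp
  linear_combination hpow

lemma mul_rpow_sub_one_le_rpow {z u γ : ℝ} (hz : 0 ≤ z) (hzu : z ≤ u) :
    z * u ^ (γ - 1) ≤ u ^ γ := by
  rcases (hz.trans hzu).eq_or_lt with rfl | hu
  · obtain rfl : z = 0 := le_antisymm hzu hz
    simpa using rpow_nonneg le_rfl γ
  · calc z * u ^ (γ - 1) ≤ u * u ^ (γ - 1) := by gcongr
      _ = u ^ γ := by rw [rpow_sub_one hu.ne', mul_div_cancel₀ _ hu.ne']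

lemma exists_mem_Ioo_mul_div_one_sub_add_mul_le (a b : ℝ) {ε : ℝ} (hε : 0 < ε) :
    ∃ γ ∈ Ioo (0 : ℝ) 1, a * (γ / (1 - γ)) + b * γ ≤ ε := by
  have hcont : ContinuousAt (fun γ : ℝ ↦ a * (γ / (1 - γ)) + b * γ) 0 := by
    fun_prop (disch := norm_num)
  have hsmall : ∀ᶠ γ in 𝓝[>] (0 : ℝ), a * (γ / (1 - γ)) + b * γ ≤ ε :=
    nhdsWithin_le_nhds (hcont.eventually (ge_mem_nhds (by simpa using hε)))
  have hunit : ∀ᶠ γ in 𝓝[>] (0 : ℝ), γ ∈ Ioo (0 : ℝ) 1 := Ioo_mem_nhdsGT one_pos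
  exact (hunit.and hsmall).exists

lemma eventually_log_add_le_mul_rpow {γ c : ℝ} (hγ : 0 < γ) (hc : 0 < c) (C : ℝ) :
    ∀ᶠ u in atTop, log u + C ≤ c * u ^ γ := by
  have hlittle : (fun u ↦ log u + C) =o[atTop] fun u ↦ u ^ γ :=
    (isLittleO_log_rpow_atTop hγ).add <| isLittleO_const_left.2 <| Or.inr <|
      tendsto_norm_atTop_atTop.comp (tendsto_rpow_atTop hγ)
  filter_upwards [hlittle.bound hc, eventually_ge_atTop 0] with u hbound hu
  rw [norm_of_nonneg (rpow_nonneg hu γ)] at hbound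
  exact (le_norm_self _).trans hbound

lemma dualHJBOperator_power_le {κ d₁ d₂ d₃ δ γ z : ℝ} (hd₂ : 0 ≤ d₂) (hγ : γ ∈ Ioo (0 : ℝ) 1)
    (hz : 0 ≤ z) :
    dualHJBOperator κ d₁ d₂ d₃ δ z ((z + 1) ^ γ) (γ * (z + 1) ^ (γ - 1))
        (γ * (γ - 1) * (z + 1) ^ (γ - 2))
      ≤ (d₁ ^ 2 / 2 * (γ / (1 - γ)) + |d₃| * γ - κ) * (z + 1) ^ γ
        + (log (z + 1) + (|δ| - 1 - log γ)) := by
  obtain ⟨hγ₀, hγ₁⟩ := hγ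
  have hu : 0 < z + 1 := by linarith
  have hslope_pos : 0 < (z + 1) ^ (γ - 1) := rpow_pos_of_pos hu _
  have hslope_le : (z + 1) ^ (γ - 1) ≤ 1 :=
    rpow_le_one_of_one_le_of_nonpos (by linarith) (by linarith)
  have hquot : -(d₁ ^ 2 / 2) * (γ / (γ - 1) * (z + 1) ^ γ)
      = d₁ ^ 2 / 2 * (γ / (1 - γ)) * (z + 1) ^ γ := by
    rw [← neg_div_neg_eq γ, neg_sub]; ring
  have hdiffusion : d₂ * z ^ 2 * (γ * (γ - 1) * (z + 1) ^ (γ - 2)) ≤ 0 :=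
    mul_nonpos_of_nonneg_of_nonpos (by positivity)
      (mul_nonpos_of_nonpos_of_nonneg (by nlinarith) (rpow_pos_of_pos hu _).le)
  have hdrift : d₃ * z * (γ * (z + 1) ^ (γ - 1)) ≤ |d₃| * γ * (z + 1) ^ γ :=
    calc d₃ * z * (γ * (z + 1) ^ (γ - 1)) = d₃ * (γ * (z * (z + 1) ^ (γ - 1))) := by ring
      _ ≤ |d₃| * (γ * (z * (z + 1) ^ (γ - 1))) := by gcongr; exact le_abs_self d₃
      _ ≤ |d₃| * γ * (z + 1) ^ γ := by
        rw [← mul_assoc]; gcongr; exact mul_rpow_sub_one_le_rpow hz (by linarith)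
  have hconst : δ * (γ * (z + 1) ^ (γ - 1)) ≤ |δ| :=
    calc δ * (γ * (z + 1) ^ (γ - 1)) ≤ |δ| * (γ * (z + 1) ^ (γ - 1)) := by
          gcongr; exact le_abs_self δ
      _ ≤ |δ| * 1 := by gcongr; nlinarith
      _ = |δ| := mul_one _
  have hlog : -log (z + 1) ≤ (γ - 1) * log (z + 1) := by
    nlinarith [log_nonneg (show 1 ≤ z + 1 by linarith)]
  unfold dualHJBOperator
  rw [mul_div_assoc, sq_mul_rpow_sub_one_div hu hγ₀.ne' hγ₁.ne, hquot,
    log_mul hγ₀.ne' hslope_pos.ne', log_rpow hu]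
  linarith

theorem power_supersolution_dual_HJB_general
    (κ d₁ d₂ d₃ δ : ℝ) (hκ : 0 < κ) (hd₂ : 0 < d₂) :
    ∃ C₃ : ℝ, 0 < C₃ ∧ ∃ γ : ℝ, γ ∈ Set.Ioo (0:ℝ) 1 ∧ ∃ Z : ℝ, ∀ z : ℝ, Z ≤ z →
      -(d₁^2/2) * (γ * (z + C₃) ^ (γ - 1))^2 / (γ * (γ - 1) * (z + C₃) ^ (γ - 2))
        + d₂ * z^2 * (γ * (γ - 1) * (z + C₃) ^ (γ - 2))
        + d₃ * z * (γ * (z + C₃) ^ (γ - 1))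
        + δ * (γ * (z + C₃) ^ (γ - 1))
        - 1 - Real.log (γ * (z + C₃) ^ (γ - 1))
        - κ * ((z + C₃) ^ γ) ≤ 0 := by
  obtain ⟨γ, hγ, hcoeff⟩ :=
    exists_mem_Ioo_mul_div_one_sub_add_mul_le (d₁ ^ 2 / 2) |d₃| (half_pos hκ)
  have hlarge : ∀ᶠ z in atTop, log (z + 1) + (|δ| - 1 - log γ) ≤ κ / 2 * (z + 1) ^ γ :=
    (tendsto_atTop_add_const_right atTop 1 tendsto_id).eventually
      (eventually_log_add_le_mul_rpow hγ.1 (half_pos hκ) _)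
  obtain ⟨Z, hZ⟩ := eventually_atTop.1 (hlarge.and (eventually_ge_atTop 0))
  refine ⟨1, one_pos, γ, hγ, Z, fun z hz ↦ ?_⟩
  obtain ⟨hlog, hz₀⟩ := hZ z hz
  have hdecay : (d₁ ^ 2 / 2 * (γ / (1 - γ)) + |d₃| * γ - κ) * (z + 1) ^ γ
      ≤ -(κ / 2) * (z + 1) ^ γ := by
    gcongr; linarith
  exact (dualHJBOperator_power_le hd₂.le hγ hz₀).trans (by linarith)

/-- W⁺(z) = (z + C₃)^γ is a supersolution of the stationary dual HJB equation
for suitable C₃ > 0 and γ ∈ (0,1) close to 1, and all large z. -/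
theorem power_supersolution_dual_HJB
    (κ d₁ d₂ d₃ δ : ℝ) (hκ : 0 < κ) (hd₁ : d₁ ≠ 0) (hd₂ : 0 < d₂) :
    ∃ C₃ : ℝ, 0 < C₃ ∧ ∃ γ : ℝ, γ ∈ Set.Ioo (0:ℝ) 1 ∧ ∃ Z : ℝ, ∀ z : ℝ, Z ≤ z →
      -(d₁^2/2) * (γ * (z + C₃) ^ (γ - 1))^2 / (γ * (γ - 1) * (z + C₃) ^ (γ - 2))
        + d₂ * z^2 * (γ * (γ - 1) * (z + C₃) ^ (γ - 2))
        + d₃ * z * (γ * (z + C₃) ^ (γ - 1))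
        + δ * (γ * (z + C₃) ^ (γ - 1))
        - 1 - Real.log (γ * (z + C₃) ^ (γ - 1))
        - κ * ((z + C₃) ^ γ) ≤ 0 :=
  power_supersolution_dual_HJB_general κ d₁ d₂ d₃ δ hκ hd₂
end

section
/- Fix constants κ > 0, d₁, d₂ > 0, d₃, δ ∈ ℝ. There exist constants C₁, C₂ > 0 such that W⁻(z) = C₁ log(z + C₂) satisfies the subsolution inequality −(d₁²/2)·(W⁻')²/W⁻'' + d₂ z² W⁻'' + d₃ z W⁻' + δ W⁻' − 1 − log(W⁻') − κ W⁻ ≥ 0 for all sufficiently large z > 0. -/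
/-!
For `W(z) = C₁ log (z + 1)` the Hamiltonian term `-(W')² / W''` is the constant `C₁`, and the
diffusion and drift terms are bounded because `z² W''`, `z W'` and `W'` are. What is left is
`-log W' - κ W = (1 - κ C₁) log (z + 1) - log C₁`, which tends to `+∞` as soon as `κ C₁ < 1`.
-/

open Real

lemma neg_mul_sq_div_div_neg_div_sq (a C x : ℝ) (hC : C ≠ 0) (hx : x ≠ 0) :
    -a * (C / x) ^ 2 / (-(C / x ^ 2)) = a * C := by
  field_simp

lemma neg_abs_mul_le_mul {a u C : ℝ} (hu₀ : 0 ≤ u) (huC : u ≤ C) : -(|a| * C) ≤ a * u :=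
  calc -(|a| * C) ≤ -(|a| * u) := neg_le_neg (mul_le_mul_of_nonneg_left huC (abs_nonneg a))
    _ = -|a| * u := by ring
    _ ≤ a * u := mul_le_mul_of_nonneg_right (neg_abs_le a) hu₀

lemma neg_le_diffusion_add_drift_log (a b c : ℝ) {C z : ℝ} (hC : 0 ≤ C) (hz : 0 ≤ z) :
    -((|a| + |b| + |c|) * C) ≤
      a * z ^ 2 * (-(C / (z + 1) ^ 2)) + b * z * (C / (z + 1)) + c * (C / (z + 1)) := by
  have hz₁ : 0 < z + 1 := by linarith
  have hdiff : z ^ 2 * (C / (z + 1) ^ 2) ≤ C := by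
    rw [mul_div_assoc', div_le_iff₀ (by positivity)]
    nlinarith
  have hdrift : z * (C / (z + 1)) ≤ C := by
    rw [mul_div_assoc', div_le_iff₀ hz₁]
    nlinarith
  have hconst : C / (z + 1) ≤ C := div_le_self hC (by linarith)
  have ha := neg_abs_mul_le_mul (a := -a) (by positivity) hdiff
  have hb := neg_abs_mul_le_mul (a := b) (by positivity) hdrift
  have hc := neg_abs_mul_le_mul (a := c) (by positivity) hconst
  rw [abs_neg] at ha
  linarith

theorem log_subsolution_dual_HJB_general
    (κ d₁ d₂ d₃ δ : ℝ) (hκ : 0 < κ) :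
    ∃ C₁ : ℝ, 0 < C₁ ∧ ∃ C₂ : ℝ, 0 < C₂ ∧ ∃ Z : ℝ, ∀ z : ℝ, Z ≤ z →
      0 ≤ -(d₁^2/2) * (C₁ / (z + C₂))^2 / (-(C₁ / (z + C₂)^2))
        + d₂ * z^2 * (-(C₁ / (z + C₂)^2))
        + d₃ * z * (C₁ / (z + C₂))
        + δ * (C₁ / (z + C₂))
        - 1 - Real.log (C₁ / (z + C₂))
        - κ * (C₁ * Real.log (z + C₂)) := by
  set C₁ : ℝ := 1 / (2 * κ)
  have hC₁ : 0 < C₁ := by positivity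
  have hκC₁ : κ * C₁ = 1 / 2 := by simp only [C₁]; field_simp
  set B := (|d₂| + |d₃| + |δ|) * C₁ + 1 + log C₁
  refine ⟨C₁, hC₁, 1, one_pos, max 0 (exp (2 * B) - 1), fun z hz => ?_⟩
  have hz₀ : 0 ≤ z := le_of_max_le_left hz
  have hz₁ : 0 < z + 1 := by linarith
  have hlog : 2 * B ≤ log (z + 1) :=
    (le_log_iff_exp_le hz₁).2 (by linarith [le_of_max_le_right hz])
  have hbounded := neg_le_diffusion_add_drift_log d₂ d₃ δ hC₁.le hz₀
  have hκlog : κ * (C₁ * log (z + 1)) = log (z + 1) / 2 := by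
    rw [← mul_assoc, hκC₁]; ring
  rw [neg_mul_sq_div_div_neg_div_sq _ _ _ hC₁.ne' hz₁.ne', log_div hC₁.ne' hz₁.ne', hκlog]
  have : 0 ≤ d₁ ^ 2 / 2 * C₁ := by positivity
  linarith

/-- W⁻(z) = C₁ log(z + C₂) is a subsolution of the stationary dual HJB equation
for suitable C₁, C₂ > 0 and all large z. -/
theorem log_subsolution_dual_HJB
    (κ d₁ d₂ d₃ δ : ℝ) (hκ : 0 < κ) (hd₁ : 0 < d₁) (hd₂ : 0 < d₂) :
    ∃ C₁ : ℝ, 0 < C₁ ∧ ∃ C₂ : ℝ, 0 < C₂ ∧ ∃ Z : ℝ, ∀ z : ℝ, Z ≤ z →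
      0 ≤ -(d₁^2/2) * (C₁ / (z + C₂))^2 / (-(C₁ / (z + C₂)^2))
        + d₂ * z^2 * (-(C₁ / (z + C₂)^2))
        + d₃ * z * (C₁ / (z + C₂))
        + δ * (C₁ / (z + C₂))
        - 1 - Real.log (C₁ / (z + C₂))
        - κ * (C₁ * Real.log (z + C₂)) :=
  log_subsolution_dual_HJB_general κ d₁ d₂ d₃ δ hκ
end
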